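/- For every natural number n and every real x, the physicists' Hermite polynomial satisfies |H_n(x)| ≤ 4^n (1 + n/2) (2^(n/2) n^(n/2) + |x|^n), with 0^0 interpreted as 1. -/
import Mathlib

open Real

/-- The `n`-th physicists' Hermite polynomial, via its explicit sum formula. -/
noncomputable def physHermite (n : ℕ) (x : ℝ) : ℝ :=
  ∑ m ∈ Finset.range (n / 2 + 1),
    (-1 : ℝ) ^ m * (Nat.factorial n : ℝ) /
      ((Nat.factorial m : ℝ) * (Nat.factorial (n - 2 * m) : ℝ)) * (2 * x) ^ (n - 2 * m)

lemma aux_choose_le_two_pow (n k : ℕ) : n.choose k ≤ 2 ^ n := by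
  rcases le_or_gt k n with h | h
  · calc n.choose k ≤ ∑ m ∈ Finset.range (n+1), n.choose m :=
        Finset.single_le_sum (f := fun m => n.choose m) (fun _ _ => Nat.zero_le _)
          (Finset.mem_range.2 (by omega))
    _ = 2 ^ n := Nat.sum_range_choose n
  · simp [Nat.choose_eq_zero_of_lt h]

lemma aux_fact_bound (n m : ℕ) (hm : 2 * m ≤ n) :
    n.factorial ≤ 2 ^ n * 2 ^ (2 * m) * n ^ m * (m.factorial * (n - 2 * m).factorial) := by
  have h1 : n.choose (2*m) * (2*m).factorial * (n - 2*m).factorial = n.factorial :=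
    Nat.choose_mul_factorial_mul_factorial hm
  have h2 : (2*m).choose m * m.factorial * m.factorial = (2*m).factorial := by
    have := Nat.choose_mul_factorial_mul_factorial (n := 2*m) (k := m) (by omega)
    simpa [Nat.two_mul, Nat.add_sub_cancel] using this
  have h3 : m.factorial ≤ n ^ m :=
    le_trans (Nat.factorial_le_pow m) (Nat.pow_le_pow_left (by omega) m)
  have h4 : n.choose (2*m) ≤ 2 ^ n := aux_choose_le_two_pow n (2*m)
  have h5 : (2*m).choose m ≤ 2 ^ (2*m) := aux_choose_le_two_pow (2*m) m
  calc n.factorial = n.choose (2*m) * ((2*m).choose m * m.factorial * m.factorial)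
        * (n - 2*m).factorial := by rw [h2, ← h1]
    _ ≤ 2 ^ n * (2 ^ (2*m) * n ^ m * m.factorial) * (n - 2*m).factorial := by
        gcongr
    _ = 2 ^ n * 2 ^ (2*m) * n ^ m * (m.factorial * (n - 2*m).factorial) := by ring

lemma aux_key (n m : ℕ) (x : ℝ) (hm : 2 * m ≤ n) :
    (n : ℝ) ^ m * |x| ^ (n - 2 * m) ≤
      (2 : ℝ) ^ ((n : ℝ) / 2) * (n : ℝ) ^ ((n : ℝ) / 2) + |x| ^ n := by
  set s := Real.sqrt n with hs
  have hs2 : s ^ 2 = (n : ℝ) := Real.sq_sqrt (by positivity)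
  have hsn : s ^ n = (n : ℝ) ^ ((n : ℝ) / 2) := by
    rw [hs, Real.sqrt_eq_rpow, ← Real.rpow_natCast ((n:ℝ) ^ (1/(2:ℝ))) n,
      ← Real.rpow_mul (by positivity)]
    ring_nf
  rcases le_or_gt (|x|) s with h | h
  · -- |x| ≤ √n
    have : (n : ℝ) ^ m * |x| ^ (n - 2*m) ≤ s ^ (2*m) * s ^ (n - 2*m) := by
      rw [pow_mul, hs2]
      exact mul_le_mul_of_nonneg_left (pow_le_pow_left₀ (abs_nonneg x) h _) (by positivity)
    calc (n : ℝ) ^ m * |x| ^ (n - 2*m) ≤ s ^ (2*m) * s ^ (n - 2*m) := this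
      _ = s ^ n := by rw [← pow_add]; congr 1; omega
      _ = (n : ℝ) ^ ((n : ℝ) / 2) := hsn
      _ ≤ (2 : ℝ) ^ ((n : ℝ) / 2) * (n : ℝ) ^ ((n : ℝ) / 2) + |x| ^ n := by
          nlinarith [Real.one_le_rpow (show (1:ℝ) ≤ 2 by norm_num) (show (0:ℝ) ≤ (n:ℝ)/2 by positivity),
            Real.rpow_nonneg (show (0:ℝ) ≤ n by positivity) ((n:ℝ)/2),
            pow_nonneg (abs_nonneg x) n]
  · -- √n < |x|
    have hn : (n : ℝ) ≤ |x| ^ 2 := by nlinarith [Real.sqrt_nonneg (n : ℝ)]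
    calc (n : ℝ) ^ m * |x| ^ (n - 2*m) ≤ (|x| ^ 2) ^ m * |x| ^ (n - 2*m) := by
          exact mul_le_mul_of_nonneg_right (pow_le_pow_left₀ (by positivity) hn m) (by positivity)
      _ = |x| ^ n := by rw [← pow_mul, ← pow_add]; congr 1; omega
      _ ≤ (2 : ℝ) ^ ((n : ℝ) / 2) * (n : ℝ) ^ ((n : ℝ) / 2) + |x| ^ n := by
          nlinarith [Real.rpow_nonneg (show (0:ℝ) ≤ 2 by norm_num) ((n:ℝ)/2),
            Real.rpow_nonneg (show (0:ℝ) ≤ n by positivity) ((n:ℝ)/2)]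

theorem hermite_bound (n : ℕ) (x : ℝ) :
    |physHermite n x| ≤
      4 ^ n * (1 + (n : ℝ) / 2) *
        ((2 : ℝ) ^ ((n : ℝ) / 2) * (n : ℝ) ^ ((n : ℝ) / 2) + |x| ^ n) := by
  set B : ℝ := (2 : ℝ) ^ ((n : ℝ) / 2) * (n : ℝ) ^ ((n : ℝ) / 2) + |x| ^ n with hB
  have hB0 : 0 ≤ B := by
    have := Real.rpow_nonneg (show (0:ℝ) ≤ 2 by norm_num) ((n:ℝ)/2)
    have := Real.rpow_nonneg (show (0:ℝ) ≤ n by positivity) ((n:ℝ)/2)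
    have := pow_nonneg (abs_nonneg x) n
    positivity
  have hterm : ∀ m ∈ Finset.range (n / 2 + 1),
      |(-1 : ℝ) ^ m * (Nat.factorial n : ℝ) /
        ((Nat.factorial m : ℝ) * (Nat.factorial (n - 2 * m) : ℝ)) * (2 * x) ^ (n - 2 * m)|
        ≤ 4 ^ n * B := by
    intro m hmem
    have hm : 2 * m ≤ n := by
      have := Finset.mem_range.1 hmem; omega
    have hfm : (0:ℝ) < (Nat.factorial m : ℝ) := by exact_mod_cast Nat.factorial_pos m
    have hfnm : (0:ℝ) < (Nat.factorial (n - 2*m) : ℝ) := by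
      exact_mod_cast Nat.factorial_pos (n - 2*m)
    have habs : |(-1 : ℝ) ^ m * (Nat.factorial n : ℝ) /
        ((Nat.factorial m : ℝ) * (Nat.factorial (n - 2 * m) : ℝ)) * (2 * x) ^ (n - 2 * m)|
        = (Nat.factorial n : ℝ) / ((Nat.factorial m : ℝ) * (Nat.factorial (n - 2*m) : ℝ))
          * (2 * |x|) ^ (n - 2*m) := by
      rw [abs_mul, abs_div, abs_mul, abs_mul, abs_pow, abs_pow, abs_neg, abs_one, one_pow,
        one_mul, abs_mul]
      simp [abs_of_pos hfm, abs_of_pos hfnm, Nat.abs_cast, abs_of_nonneg (show (0:ℝ) ≤ 2 by norm_num)]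
    rw [habs]
    have hfac : (Nat.factorial n : ℝ) /
        ((Nat.factorial m : ℝ) * (Nat.factorial (n - 2*m) : ℝ))
        ≤ 2 ^ n * 2 ^ (2*m) * (n : ℝ) ^ m := by
      rw [div_le_iff₀ (by positivity)]
      have := aux_fact_bound n m hm
      calc (Nat.factorial n : ℝ)
          ≤ ((2 ^ n * 2 ^ (2 * m) * n ^ m * (m.factorial * (n - 2 * m).factorial) : ℕ) : ℝ) := by
            exact_mod_cast this
        _ = 2 ^ n * 2 ^ (2*m) * (n : ℝ) ^ m
            * ((Nat.factorial m : ℝ) * (Nat.factorial (n - 2*m) : ℝ)) := by push_cast; ring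
    have hx : (0:ℝ) ≤ (2 * |x|) ^ (n - 2*m) := by positivity
    calc (Nat.factorial n : ℝ) / ((Nat.factorial m : ℝ) * (Nat.factorial (n - 2*m) : ℝ))
          * (2 * |x|) ^ (n - 2*m)
        ≤ (2 ^ n * 2 ^ (2*m) * (n : ℝ) ^ m) * (2 * |x|) ^ (n - 2*m) := by gcongr
      _ = 4 ^ n * ((n : ℝ) ^ m * |x| ^ (n - 2*m)) := by
          rw [mul_pow]
          rw [show (4:ℝ) ^ n = 2 ^ n * 2 ^ n by rw [← mul_pow]; norm_num]
          rw [show (2:ℝ) ^ n = 2 ^ (2*m) * 2 ^ (n - 2*m) by rw [← pow_add]; congr 1; omega]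
          ring
      _ ≤ 4 ^ n * B := by
          have := aux_key n m x hm
          rw [hB]; exact mul_le_mul_of_nonneg_left this (by positivity)
  calc |physHermite n x| ≤ ∑ m ∈ Finset.range (n / 2 + 1),
        |(-1 : ℝ) ^ m * (Nat.factorial n : ℝ) /
          ((Nat.factorial m : ℝ) * (Nat.factorial (n - 2 * m) : ℝ)) * (2 * x) ^ (n - 2 * m)| :=
        Finset.abs_sum_le_sum_abs _ _
    _ ≤ (n / 2 + 1 : ℕ) • (4 ^ n * B) := by
        simpa using Finset.sum_le_card_nsmul _ _ _ hterm
    _ = ((n / 2 + 1 : ℕ) : ℝ) * (4 ^ n * B) := by rw [nsmul_eq_mul]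
    _ ≤ (1 + (n : ℝ) / 2) * (4 ^ n * B) := by
        have h1 : ((n / 2 + 1 : ℕ) : ℝ) ≤ 1 + (n : ℝ) / 2 := by
          push_cast
          have := Nat.cast_div_le (m := n) (n := 2) (α := ℝ)
          push_cast at this
          linarith
        have h2 : (0:ℝ) ≤ 4 ^ n * B := by positivity
        exact mul_le_mul_of_nonneg_right h1 h2
    _ = 4 ^ n * (1 + (n : ℝ) / 2) * B := by ring
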